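/- Let K, L be bounded convex sets in the plane with nonempty interior, where K has area 1. Let K_n be n points chosen independently and uniformly at random from K. Fix any ε > 0. Then with probability tending to 1 as n → ∞, there is no hole contained in K homothetic to L with area greater than (1+3ε)·log n / n. -/

import Mathlib

/-!
A homothet `x +ᵥ r • L` of area more than `c log n / n`, `c > 1`, contains a smaller homothet of
area `c' log n / n`, `1 < c' < c`, whose position may be moved by `≍ (√c - √c') √(log n / n)`
while staying inside: shrinking `L` about a ball it contains leaves that much room. So it contains
one of `O(n)` fixed copies, indexed by a grid of mesh `≍ 1 / √n` in the bounded set `K`. Each of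
these is missed by all `n` points with probability `(1 - c' log n / n)^n ≤ n^(-c')`, and the union
bound gives `O(n^(1 - c')) → 0`.
-/

open MeasureTheory Filter Set Bornology

noncomputable section

/-- Rotation of the plane by angle `θ`. -/
def rot (θ : ℝ) (p : ℝ × ℝ) : ℝ × ℝ :=
  (p.1 * Real.cos θ - p.2 * Real.sin θ, p.1 * Real.sin θ + p.2 * Real.cos θ)

/-- A rectangle: the image of an axis-parallel closed rectangle `[0,a] × [0,b]`
(with `a, b > 0`) under a rigid motion (rotation followed by translation). -/
def IsRectangle (R : Set (ℝ × ℝ)) : Prop :=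
  ∃ (θ : ℝ) (c : ℝ × ℝ) (a b : ℝ), 0 < a ∧ 0 < b ∧
    R = (fun p => c + rot θ p) '' (Icc 0 a ×ˢ Icc 0 b)

/-- `S` is a homothetic copy of `L`: `S = x + r • L` for some `x` and ratio `r > 0`. -/
def IsHomothet (L S : Set (ℝ × ℝ)) : Prop :=
  ∃ (x : ℝ × ℝ) (r : ℝ), 0 < r ∧ S = (fun y => x + r • y) '' L

/-- The joint distribution of `n` points chosen independently, each uniformly at
random from `K` (where `K` has area 1, so the uniform distribution on `K` is the
restriction of Lebesgue measure to `K`). -/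
def unifPts (K : Set (ℝ × ℝ)) (n : ℕ) : Measure (Fin n → ℝ × ℝ) :=
  Measure.pi fun _ => volume.restrict K

open Metric
open scoped ENNReal Pointwise Topology

theorem image_add_smul_eq_vadd_smul {E : Type*} [AddCommGroup E] [Module ℝ E]
    (x : E) (r : ℝ) (A : Set E) : (fun y => x + r • y) '' A = x +ᵥ r • A := by
  rw [← image_smul, ← image_vadd, image_image]
  rfl

theorem Convex.vadd_smul_subset_vadd_smul {E : Type*} [AddCommGroup E] [Module ℝ E]
    {L : Set E} (hL : Convex ℝ L) {r r' : ℝ} (hr' : 0 ≤ r') (hrr' : r' ≤ r) {w : E} (hw : w ∈ L)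
    (x : E) : (x + (r - r') • w) +ᵥ r' • L ⊆ x +ᵥ r • L := by
  have hsplit : r • L = r' • L + (r - r') • L := by
    rw [← hL.add_smul hr' (sub_nonneg.2 hrr'), add_sub_cancel]
  rintro - ⟨y, hy, rfl⟩
  refine ⟨y + (r - r') • w, hsplit ▸ add_mem_add hy (smul_mem_smul_set hw), ?_⟩
  simp only [vadd_eq_add]
  abel

theorem Convex.vadd_smul_subset_of_dist_lt {E : Type*} [NormedAddCommGroup E] [NormedSpace ℝ E]
    {L : Set E} (hL : Convex ℝ L) {z : E} {ρ : ℝ} (hball : ball z ρ ⊆ L) {r r' : ℝ}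
    (hr' : 0 ≤ r') (hrr' : r' < r) {x g : E} (hg : dist g (x + r • z) < (r - r') * ρ) :
    (g - r' • z) +ᵥ r' • L ⊆ x +ᵥ r • L := by
  have hpos : 0 < r - r' := sub_pos.2 hrr'
  set w := z + (r - r')⁻¹ • (g - (x + r • z))
  have hw : w ∈ ball z ρ := by
    rw [mem_ball, dist_eq_norm, add_sub_cancel_left, norm_smul, Real.norm_eq_abs,
      abs_inv, abs_of_pos hpos, inv_mul_lt_iff₀ hpos, ← dist_eq_norm]
    exact hg
  have hgw : g - r' • z = x + (r - r') • w := by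
    rw [smul_add, smul_smul, mul_inv_cancel₀ hpos.ne', one_smul, sub_smul]
    abel
  rw [hgw]
  exact hL.vadd_smul_subset_vadd_smul hr' hrr'.le (hball hw) x

theorem volume_vadd_smul (x : ℝ × ℝ) (r : ℝ) (A : Set (ℝ × ℝ)) :
    volume (x +ᵥ r • A) = ENNReal.ofReal (r ^ 2) * volume A := by
  rw [measure_vadd, Measure.addHaar_smul, Module.finrank_prod, Module.finrank_self,
    one_add_one_eq_two, abs_pow, sq_abs]

theorem Convex.volume_interior {s : Set (ℝ × ℝ)} (hs : Convex ℝ s) :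
    volume (interior s) = volume s :=
  measure_interior_of_null_frontier (hs.addHaar_frontier volume)

theorem exists_int_mem_Icc_abs_mul_sub_lt {D δ t : ℝ} (hδ : 0 < δ) (ht : |t| ≤ D) :
    ∃ k ∈ Finset.Icc (-(⌈D / δ⌉₊ : ℤ)) ⌈D / δ⌉₊, |k * δ - t| < δ := by
  have hfloor := Int.floor_le (t / δ)
  have hfloor' := Int.lt_floor_add_one (t / δ)
  have htD : |t / δ| ≤ D / δ := by
    rw [abs_div, abs_of_pos hδ]; exact div_le_div_of_nonneg_right ht hδ.le
  have hceil : D / δ ≤ ⌈D / δ⌉₊ := Nat.le_ceil _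
  refine ⟨⌊t / δ⌋, Finset.mem_Icc.2 ⟨?_, ?_⟩, ?_⟩
  · have : -((⌈D / δ⌉₊ : ℤ) : ℝ) < ⌊t / δ⌋ + 1 := by
      push_cast; linarith [neg_abs_le (t / δ)]
    exact_mod_cast Int.lt_add_one_iff.1 (by exact_mod_cast this)
  · have : ((⌊t / δ⌋ : ℤ) : ℝ) ≤ ((⌈D / δ⌉₊ : ℤ) : ℝ) := by
      push_cast; linarith [le_abs_self (t / δ)]
    exact_mod_cast this
  · rw [abs_sub_comm, abs_of_nonneg (by rw [sub_nonneg]; exact (le_div_iff₀ hδ).1 hfloor)]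
    have := (div_lt_iff₀ hδ).1 hfloor'
    linarith [add_mul ((⌊t / δ⌋ : ℤ) : ℝ) 1 δ]

theorem exists_finset_card_le_forall_dist_lt {D δ : ℝ} (hD : 0 ≤ D) (hδ : 0 < δ) :
    ∃ G : Finset (ℝ × ℝ), (G.card : ℝ) ≤ (2 * D / δ + 3) ^ 2 ∧
      ∀ p ∈ closedBall (0 : ℝ × ℝ) D, ∃ g ∈ G, dist g p < δ := by
  set N := ⌈D / δ⌉₊
  set I := Finset.Icc (-(N : ℤ)) N
  refine ⟨(I ×ˢ I).image fun k => ((k.1 : ℝ) * δ, (k.2 : ℝ) * δ), ?_, ?_⟩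
  · have hI : (I.card : ℝ) = 2 * N + 1 := by
      rw [Int.card_Icc, show (N : ℤ) + 1 - -(N : ℤ) = ((2 * N + 1 : ℕ) : ℤ) by push_cast; ring,
        Int.toNat_natCast]
      push_cast; ring
    have hN : (N : ℝ) < D / δ + 1 := Nat.ceil_lt_add_one (div_nonneg hD hδ.le)
    calc (((I ×ˢ I).image _).card : ℝ) ≤ ((I ×ˢ I).card : ℝ) := mod_cast Finset.card_image_le
      _ = (2 * N + 1) ^ 2 := by rw [Finset.card_product, Nat.cast_mul, hI, sq]
      _ ≤ (2 * D / δ + 3) ^ 2 := by gcongr ?_ ^ 2; linarith [mul_div_assoc 2 D δ]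
  · intro p hp
    rw [mem_closedBall, dist_zero_right] at hp
    obtain ⟨i, hi, hpi⟩ := exists_int_mem_Icc_abs_mul_sub_lt hδ ((norm_fst_le p).trans hp)
    obtain ⟨j, hj, hpj⟩ := exists_int_mem_Icc_abs_mul_sub_lt hδ ((norm_snd_le p).trans hp)
    refine ⟨_, Finset.mem_image_of_mem _ (Finset.mk_mem_product hi hj), ?_⟩
    rw [Prod.dist_eq]
    exact max_lt hpi hpj

theorem isProbabilityMeasure_restrict_of_measure_eq_one {α : Type*} [MeasurableSpace α]
    {μ : Measure α} {s : Set α} (hs : μ s = 1) : IsProbabilityMeasure (μ.restrict s) :=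
  ⟨by rw [Measure.restrict_apply_univ, hs]⟩

theorem isProbabilityMeasure_unifPts {K : Set (ℝ × ℝ)} (hK : volume K = 1) (n : ℕ) :
    IsProbabilityMeasure (unifPts K n) :=
  have := isProbabilityMeasure_restrict_of_measure_eq_one hK
  Measure.pi.instIsProbabilityMeasure _

theorem MeasureTheory.Measure.pi_setOf_forall_notMem {ι Ω : Type*} [Fintype ι] [MeasurableSpace Ω]
    (μ : Measure Ω) [IsProbabilityMeasure μ] {U : Set Ω} (hU : MeasurableSet U) :
    Measure.pi (fun _ : ι => μ) {ω | ∀ i, ω i ∉ U} = (1 - μ U) ^ Fintype.card ι := by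
  have hpi : {ω : ι → Ω | ∀ i, ω i ∉ U} = univ.pi fun _ => Uᶜ := by ext; simp
  rw [hpi, Measure.pi_pi, prob_compl_eq_one_sub hU, Finset.prod_const, Finset.card_univ]

theorem unifPts_setOf_forall_notMem {K U : Set (ℝ × ℝ)} (hK : volume K = 1)
    (hU : MeasurableSet U) (hUK : U ⊆ K) (n : ℕ) :
    unifPts K n {ω | ∀ i, ω i ∉ U} = (1 - volume U) ^ n := by
  have := isProbabilityMeasure_restrict_of_measure_eq_one hK
  rw [unifPts, Measure.pi_setOf_forall_notMem _ hU, Measure.restrict_eq_self _ hUK,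
    Fintype.card_fin]

theorem tendsto_measure_compl_nhds_one {ι : Type*} {l : Filter ι} {Ω : ι → Type*}
    [∀ i, MeasurableSpace (Ω i)] (μ : ∀ i, Measure (Ω i)) [∀ i, IsProbabilityMeasure (μ i)]
    {s : ∀ i, Set (Ω i)} (h : Tendsto (fun i => μ i (s i)) l (𝓝 0)) :
    Tendsto (fun i => μ i (s i)ᶜ) l (𝓝 1) := by
  have hlow : ∀ i, 1 - μ i (s i) ≤ μ i (s i)ᶜ := fun i =>
    tsub_le_iff_left.2 (measure_univ (μ := μ i) ▸ measure_univ_le_add_compl (s i))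
  refine tendsto_of_tendsto_of_tendsto_of_le_of_le ?_ tendsto_const_nhds hlow fun i => prob_le_one
  simpa using ENNReal.Tendsto.sub tendsto_const_nhds h (Or.inl ENNReal.one_ne_top)

theorem ENNReal.one_sub_ofReal_le_ofReal_exp_neg {t : ℝ} (ht : 0 ≤ t) :
    1 - ENNReal.ofReal t ≤ ENNReal.ofReal (Real.exp (-t)) := by
  rw [← ENNReal.ofReal_one, ← ENNReal.ofReal_sub _ ht]
  exact ENNReal.ofReal_le_ofReal (Real.one_sub_le_exp_neg t)

theorem ENNReal.one_sub_ofReal_mul_log_div_pow_le {c : ℝ} (hc : 0 ≤ c) {n : ℕ} (hn : 0 < n) :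
    (1 - ENNReal.ofReal (c * Real.log n / n)) ^ n ≤ ENNReal.ofReal ((n : ℝ) ^ (-c)) := by
  have hn' : (0 : ℝ) < n := by exact_mod_cast hn
  have hlog := Real.log_natCast_nonneg n
  calc _ ≤ ENNReal.ofReal (Real.exp (-(c * Real.log n / n))) ^ n := by
        gcongr; exact ENNReal.one_sub_ofReal_le_ofReal_exp_neg (by positivity)
    _ = ENNReal.ofReal ((n : ℝ) ^ (-c)) := by
      rw [← ENNReal.ofReal_pow (Real.exp_pos _).le, ← Real.exp_nat_mul, Real.rpow_def_of_pos hn']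
      congr 2
      field_simp

def largeHoleEvent (K L : Set (ℝ × ℝ)) (m : ℝ≥0∞) (n : ℕ) : Set (Fin n → ℝ × ℝ) :=
  {ω | ∃ S, IsHomothet L S ∧ S ⊆ K ∧ (∀ i, ω i ∉ interior S) ∧ m < volume S}

theorem unifPts_largeHoleEvent_le {K L : Set (ℝ × ℝ)} (hKvol : volume K = 1) {D : ℝ}
    (hD : 0 ≤ D) (hKD : K ⊆ closedBall 0 D) (hL : Convex ℝ L) {z : ℝ × ℝ} {ρ : ℝ} (hρ : 0 < ρ)
    (hball : ball z ρ ⊆ L) {r r' : ℝ} (hr' : 0 ≤ r') (hrr' : r' < r) (n : ℕ) :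
    unifPts K n (largeHoleEvent K L (ENNReal.ofReal (r ^ 2) * volume L) n) ≤
      ENNReal.ofReal ((2 * D / ((r - r') * ρ) + 3) ^ 2) *
        (1 - ENNReal.ofReal (r' ^ 2) * volume L) ^ n := by
  classical
  obtain ⟨G, hGcard, hG⟩ :=
    exists_finset_card_le_forall_dist_lt hD (mul_pos (sub_pos.2 hrr') hρ)
  set copy : ℝ × ℝ → Set (ℝ × ℝ) := fun g => (g - r' • z) +ᵥ r' • L
  set G' := G.filter (copy · ⊆ K)
  have hcover : largeHoleEvent K L (ENNReal.ofReal (r ^ 2) * volume L) n ⊆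
      ⋃ g ∈ G', {ω | ∀ i, ω i ∉ interior (copy g)} := by
    rintro ω ⟨-, ⟨x, s, hs, rfl⟩, hSK, hhole, hvol⟩
    rw [image_add_smul_eq_vadd_smul] at hSK hhole hvol
    rw [volume_vadd_smul] at hvol
    have hrs : r < s := lt_of_pow_lt_pow_left₀ 2 hs.le
      ((ENNReal.ofReal_lt_ofReal_iff'.1 (lt_of_mul_lt_mul_right' hvol)).1)
    obtain ⟨g, hg, hgp⟩ :=
      hG (x + s • z) (hKD (hSK (vadd_mem_vadd_set (smul_mem_smul_set (hball (mem_ball_self hρ))))))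
    have hsub : copy g ⊆ x +ᵥ s • L := hL.vadd_smul_subset_of_dist_lt hball hr' (hrr'.trans hrs)
      (hgp.trans_le (by gcongr))
    exact mem_biUnion (Finset.mem_filter.2 ⟨hg, hsub.trans hSK⟩) fun i hi =>
      hhole i (interior_mono hsub hi)
  calc _ ≤ ∑ g ∈ G', unifPts K n {ω | ∀ i, ω i ∉ interior (copy g)} :=
        (measure_mono hcover).trans (measure_biUnion_finset_le _ _)
    _ = ∑ g ∈ G', (1 - ENNReal.ofReal (r' ^ 2) * volume L) ^ n := by
      refine Finset.sum_congr rfl fun g hg => ?_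
      rw [unifPts_setOf_forall_notMem hKvol isOpen_interior.measurableSet
        (interior_subset.trans (Finset.mem_filter.1 hg).2), ((hL.smul r').vadd _).volume_interior,
        volume_vadd_smul]
    _ ≤ G.card * (1 - ENNReal.ofReal (r' ^ 2) * volume L) ^ n := by
      rw [Finset.sum_const, nsmul_eq_mul]
      gcongr
      exact Finset.filter_subset _ G
    _ ≤ _ := by
      gcongr
      rw [← ENNReal.ofReal_natCast]
      exact ENNReal.ofReal_le_ofReal hGcard

theorem unifPts_largeHoleEvent_mul_log_div_le {K L : Set (ℝ × ℝ)} (hKvol : volume K = 1)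
    {D : ℝ} (hD : 0 ≤ D) (hKD : K ⊆ closedBall 0 D) (hL : Convex ℝ L) {z : ℝ × ℝ} {ρ : ℝ}
    (hρ : 0 < ρ) (hball : ball z ρ ⊆ L) (hLfin : volume L ≠ ∞) {c c' : ℝ} (hc' : 0 ≤ c')
    (hcc' : c' < c) {n : ℕ} (hlog : 1 ≤ Real.log n) :
    unifPts K n (largeHoleEvent K L (ENNReal.ofReal (c * Real.log n / n)) n) ≤
      ENNReal.ofReal ((2 * D * √(volume L).toReal / ((√c - √c') * ρ) + 3) ^ 2 * n) *
        ENNReal.ofReal ((n : ℝ) ^ (-c')) := by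
  set a := (volume L).toReal
  have hLa : volume L = ENNReal.ofReal a := (ENNReal.ofReal_toReal hLfin).symm
  have ha : 0 < a := ENNReal.toReal_pos
    ((measure_ball_pos volume z hρ).trans_le (measure_mono hball)).ne' hLfin
  set κ := √c - √c'
  have hκ : 0 < κ := sub_pos.2 (Real.sqrt_lt_sqrt hc' hcc')
  have hn : 0 < n := Nat.pos_of_ne_zero (by rintro rfl; norm_num at hlog)
  have hn' : (0 : ℝ) < n := by exact_mod_cast hn
  set u := √(Real.log n / (a * n))
  have hu : 0 < u := Real.sqrt_pos.2 (by positivity)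
  have harea : ∀ b, 0 ≤ b →
      ENNReal.ofReal ((√b * u) ^ 2) * volume L = ENNReal.ofReal (b * Real.log n / n) := by
    intro b hb
    rw [hLa, ← ENNReal.ofReal_mul (sq_nonneg _), mul_pow, Real.sq_sqrt hb,
      Real.sq_sqrt (by positivity)]
    congr 1
    field_simp
  have hcount : 2 * D / (κ * u * ρ) + 3 ≤ (2 * D * √a / (κ * ρ) + 3) * √n := by
    have hu_inv : u⁻¹ ≤ √a * √n := by
      rw [← Real.sqrt_mul ha.le, inv_le_iff_one_le_mul₀ hu, ← Real.sqrt_mul (by positivity),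
        show a * n * (Real.log n / (a * n)) = Real.log n by field_simp, Real.one_le_sqrt]
      exact hlog
    have hsqn : 1 ≤ √(n : ℝ) := Real.one_le_sqrt.2 (by exact_mod_cast hn)
    calc 2 * D / (κ * u * ρ) + 3 = 2 * D / (κ * ρ) * u⁻¹ + 3 := by field_simp
      _ ≤ 2 * D / (κ * ρ) * (√a * √n) + 3 * √n := by gcongr; linarith
      _ = (2 * D * √a / (κ * ρ) + 3) * √n := by ring
  calc _ = unifPts K n (largeHoleEvent K L (ENNReal.ofReal ((√c * u) ^ 2) * volume L) n) := by
        rw [harea c (hc'.trans hcc'.le)]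
    _ ≤ ENNReal.ofReal ((2 * D / ((√c * u - √c' * u) * ρ) + 3) ^ 2) *
          (1 - ENNReal.ofReal ((√c' * u) ^ 2) * volume L) ^ n :=
        unifPts_largeHoleEvent_le hKvol hD hKD hL hρ hball (by positivity) (by gcongr) n
    _ ≤ _ := by
      rw [harea c' hc', ← sub_mul]
      gcongr
      · calc (2 * D / (κ * u * ρ) + 3) ^ 2 ≤ ((2 * D * √a / (κ * ρ) + 3) * √n) ^ 2 := by gcongr
          _ = _ := by rw [mul_pow, Real.sq_sqrt hn'.le]
      · exact ENNReal.one_sub_ofReal_mul_log_div_pow_le hc' hn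

theorem tendsto_unifPts_largeHoleEvent {K L : Set (ℝ × ℝ)} (hKbd : IsBounded K)
    (hKvol : volume K = 1) (hLconv : Convex ℝ L) (hLbd : IsBounded L)
    (hLint : (interior L).Nonempty) {c : ℝ} (hc : 1 < c) :
    Tendsto (fun n : ℕ => unifPts K n (largeHoleEvent K L (ENNReal.ofReal (c * Real.log n / n)) n))
      atTop (𝓝 0) := by
  obtain ⟨z, hz⟩ := hLint
  obtain ⟨ρ, hρ, hball⟩ := isOpen_iff.1 isOpen_interior z hz
  obtain ⟨D, hD, hKD⟩ := hKbd.subset_closedBall_lt 0 0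
  obtain ⟨c', hc', hc'c⟩ := exists_between hc
  set C := (2 * D * √(volume L).toReal / ((√c - √c') * ρ) + 3) ^ 2
  have hlim : Tendsto (fun n : ℕ => ENNReal.ofReal (C * n) * ENNReal.ofReal ((n : ℝ) ^ (-c')))
      atTop (𝓝 0) := by
    have hpow := ((tendsto_rpow_neg_atTop (sub_pos.2 hc')).comp
      tendsto_natCast_atTop_atTop).const_mul C
    rw [mul_zero] at hpow
    refine (ENNReal.ofReal_zero ▸ ENNReal.tendsto_ofReal hpow).congr' ?_
    filter_upwards [eventually_gt_atTop 0] with n hn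
    have hn' : (0 : ℝ) < n := by exact_mod_cast hn
    rw [← ENNReal.ofReal_mul' (by positivity), Function.comp_apply, mul_assoc,
      ← Real.rpow_one_add' hn'.le (by linarith), neg_sub, sub_eq_add_neg]
  refine tendsto_of_tendsto_of_tendsto_of_le_of_le' tendsto_const_nhds hlim
    (Eventually.of_forall fun _ => zero_le) ?_
  filter_upwards [(Real.tendsto_log_atTop.comp tendsto_natCast_atTop_atTop).eventually_ge_atTop 1]
    with n hlog
  exact unifPts_largeHoleEvent_mul_log_div_le hKvol hD.le hKD hLconv hρ
    (hball.trans interior_subset) hLbd.measure_lt_top.ne (zero_le_one.trans hc'.le) hc'c hlog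

theorem no_large_homothetic_hole_general (K L : Set (ℝ × ℝ))
    (hKbd : IsBounded K)
    (hKvol : volume K = 1)
    (hLconv : Convex ℝ L) (hLbd : IsBounded L) (hLint : (interior L).Nonempty)
    (ε : ℝ) (hε : 0 < ε) :
    Tendsto (fun n : ℕ =>
      unifPts K n {ω : Fin n → ℝ × ℝ |
        ¬ ∃ S : Set (ℝ × ℝ), IsHomothet L S ∧ S ⊆ K ∧ (∀ i, ω i ∉ interior S) ∧
          ENNReal.ofReal ((1 + 3 * ε) * Real.log n / n) < volume S})
      atTop (nhds 1) := by
  have := isProbabilityMeasure_unifPts hKvol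
  exact tendsto_measure_compl_nhds_one (fun n => unifPts K n)
    (tendsto_unifPts_largeHoleEvent hKbd hKvol hLconv hLbd hLint (by linarith))

/-- Statement (2) in the proof of Theorem 1: for any fixed `ε > 0`, w.h.p. there is
no hole contained in `K` homothetic to `L` with area greater than `(1+3ε) log n / n`. -/
theorem no_large_homothetic_hole (K L : Set (ℝ × ℝ))
    (hKconv : Convex ℝ K) (hKbd : IsBounded K) (hKint : (interior K).Nonempty)
    (hKvol : volume K = 1)
    (hLconv : Convex ℝ L) (hLbd : IsBounded L) (hLint : (interior L).Nonempty)
    (ε : ℝ) (hε : 0 < ε) :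
    Tendsto (fun n : ℕ =>
      unifPts K n {ω : Fin n → ℝ × ℝ |
        ¬ ∃ S : Set (ℝ × ℝ), IsHomothet L S ∧ S ⊆ K ∧ (∀ i, ω i ∉ interior S) ∧
          ENNReal.ofReal ((1 + 3 * ε) * Real.log n / n) < volume S})
      atTop (nhds 1) :=
  no_large_homothetic_hole_general K L hKbd hKvol hLconv hLbd hLint ε hε
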